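/- arXiv:2204.02469 — 3 statements merged into one kernel-verified Lean document; each statement's English description precedes it below -/
import Mathlib

section
/- For an n×n complex matrix B and 1 ≤ p < ∞, ω_p([[0, B],[B, 0]]) = 2^{1/p} ω_p(B). -/
open Matrix Complex

noncomputable def schattenNorm {m : Type*} [Fintype m] [DecidableEq m] (p : ℝ)
    (A : Matrix m m ℂ) : ℝ :=
  (∑ i, Real.sqrt ((Matrix.isHermitian_conjTranspose_mul_self A).eigenvalues i) ^ p) ^ (1 / p)

noncomputable def reM {m : Type*} [Fintype m] (X : Matrix m m ℂ) : Matrix m m ℂ :=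
  (2⁻¹ : ℂ) • (X + Xᴴ)

noncomputable def imM {m : Type*} [Fintype m] (X : Matrix m m ℂ) : Matrix m m ℂ :=
  (2 * Complex.I)⁻¹ • (X - Xᴴ)

noncomputable def wp {m : Type*} [Fintype m] [DecidableEq m] (p : ℝ)
    (A : Matrix m m ℂ) : ℝ :=
  ⨆ θ : ℝ, schattenNorm p (reM (Complex.exp (θ * Complex.I) • A))

/-! `Re(e^{iθ}·)` preserves the shape `[[0, C], [C, 0]]`, and `X ↦ X*X` turns it into the block
diagonal `[[C*C, 0], [0, C*C]]`. Hence the singular values of `[[0, C], [C, 0]]` are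
those of `C`, each repeated twice, and the Schatten `p`-norm picks up the factor `2^{1/p}` for every
`θ` separately. -/

namespace Matrix

variable {𝕜 : Type*} [RCLike 𝕜] {m n : Type*} [Fintype m] [Fintype n] [DecidableEq m]
  [DecidableEq n]

theorem IsHermitian.map_eigenvalues_of_eq_fromBlocks {M : Matrix (m ⊕ n) (m ⊕ n) 𝕜}
    (hM : M.IsHermitian) {A : Matrix m m 𝕜} {D : Matrix n n 𝕜} (hA : A.IsHermitian)
    (hD : D.IsHermitian) (h : M = Matrix.fromBlocks A 0 0 D) :
    Finset.univ.val.map hM.eigenvalues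
      = Finset.univ.val.map hA.eigenvalues + Finset.univ.val.map hD.eigenvalues := by
  apply Multiset.map_injective (RCLike.ofReal_injective (K := 𝕜))
  subst h
  have hroots := hM.roots_charpoly_eq_eigenvalues
  rw [charpoly_fromBlocks_zero₁₂,
    Polynomial.roots_mul (A.charpoly_monic.mul D.charpoly_monic).ne_zero,
    hA.roots_charpoly_eq_eigenvalues, hD.roots_charpoly_eq_eigenvalues] at hroots
  simp only [Multiset.map_add, Multiset.map_map, hroots]

theorem IsHermitian.sum_eigenvalues_of_eq_fromBlocks {M : Matrix (m ⊕ n) (m ⊕ n) 𝕜}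
    (hM : M.IsHermitian) {A : Matrix m m 𝕜} {D : Matrix n n 𝕜} (hA : A.IsHermitian)
    (hD : D.IsHermitian) (h : M = Matrix.fromBlocks A 0 0 D) (f : ℝ → ℝ) :
    ∑ i, f (hM.eigenvalues i) = ∑ i, f (hA.eigenvalues i) + ∑ i, f (hD.eigenvalues i) := by
  have hsum := congrArg (fun s => (s.map f).sum) (hM.map_eigenvalues_of_eq_fromBlocks hA hD h)
  simpa only [Multiset.map_add, Multiset.sum_add, Multiset.map_map, Function.comp_def,
    ← Finset.sum_eq_multiset_sum] using hsum

end Matrix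

section SchattenNorm

variable {m : Type*} [Fintype m] [DecidableEq m]

noncomputable def schattenPowSum (p : ℝ) (A : Matrix m m ℂ) : ℝ :=
  ∑ i, Real.sqrt ((isHermitian_conjTranspose_mul_self A).eigenvalues i) ^ p

theorem schattenNorm_eq_schattenPowSum_rpow (p : ℝ) (A : Matrix m m ℂ) :
    schattenNorm p A = schattenPowSum p A ^ (1 / p) :=
  rfl

theorem schattenPowSum_nonneg (p : ℝ) (A : Matrix m m ℂ) : 0 ≤ schattenPowSum p A :=
  Finset.sum_nonneg fun _ _ => Real.rpow_nonneg (Real.sqrt_nonneg _) p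

theorem schattenPowSum_fromBlocks_zero_zero (p : ℝ) (B C : Matrix m m ℂ) :
    schattenPowSum p (fromBlocks 0 B C 0) = schattenPowSum p C + schattenPowSum p B := by
  have hsq : (fromBlocks 0 B C 0)ᴴ * fromBlocks 0 B C 0 = fromBlocks (Cᴴ * C) 0 0 (Bᴴ * B) := by
    simp [fromBlocks_conjTranspose, fromBlocks_multiply]
  exact (isHermitian_conjTranspose_mul_self _).sum_eigenvalues_of_eq_fromBlocks
    (isHermitian_conjTranspose_mul_self C) (isHermitian_conjTranspose_mul_self B) hsq
    (fun x => Real.sqrt x ^ p)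

theorem schattenNorm_fromBlocks_zero_self_self_zero (p : ℝ) (C : Matrix m m ℂ) :
    schattenNorm p (fromBlocks 0 C C 0) = (2 : ℝ) ^ (1 / p) * schattenNorm p C := by
  rw [schattenNorm_eq_schattenPowSum_rpow, schattenPowSum_fromBlocks_zero_zero, ← two_mul,
    Real.mul_rpow zero_le_two (schattenPowSum_nonneg p C), schattenNorm_eq_schattenPowSum_rpow]

end SchattenNorm

theorem reM_fromBlocks_zero_self_self_zero {m : Type*} [Fintype m] (B : Matrix m m ℂ) :
    reM (fromBlocks 0 B B 0) = fromBlocks 0 (reM B) (reM B) 0 := by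
  simp only [reM, fromBlocks_conjTranspose, conjTranspose_zero, fromBlocks_add, fromBlocks_smul,
    add_zero, smul_zero]

theorem stmt_4_general {n : ℕ} (p : ℝ) (B : Matrix (Fin n) (Fin n) ℂ) :
    wp p (Matrix.fromBlocks 0 B B 0) = (2 : ℝ) ^ (1 / p) * wp p B := by
  rw [wp, wp, Real.mul_iSup_of_nonneg (Real.rpow_nonneg zero_le_two _)]
  congr 1 with θ
  rw [fromBlocks_smul, smul_zero, reM_fromBlocks_zero_self_self_zero,
    schattenNorm_fromBlocks_zero_self_self_zero]

theorem stmt_4 {n : ℕ} (p : ℝ) (hp : 1 ≤ p) (B : Matrix (Fin n) (Fin n) ℂ) :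
    wp p (Matrix.fromBlocks 0 B B 0) = (2 : ℝ) ^ (1 / p) * wp p B :=
  stmt_4_general p B
end

section
/- For n×n complex matrices A and B and 1 ≤ p < ∞, ω_p([[0, A],[B, 0]]) = 2^{1/p - 1} sup_{θ ∈ ℝ} ‖e^{iθ}A + e^{-iθ}B*‖_p. -/
open Matrix Complex

/-! With `D = e^{iθ} A + e^{-iθ} Bᴴ`, the real part of `e^{iθ} [[0, A], [B, 0]]` is
`[[0, D / 2], [(D / 2)ᴴ, 0]]`. For any `D`, `[[0, D], [Dᴴ, 0]]ᴴ [[0, D], [Dᴴ, 0]] = diag (D Dᴴ, Dᴴ D)`,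
and `D Dᴴ`, `Dᴴ D` have the same characteristic polynomial, so every singular value of `D`
appears twice: the Schatten `p`-norm of the block matrix is `2^{1/p} ‖D‖_p`, and the factor
`1 / 2` contributes the remaining `2⁻¹`. -/

namespace Matrix

open Polynomial

variable {m : Type*} [Fintype m] [DecidableEq m]

lemma roots_charpoly_diagonal {R : Type*} [CommRing R] [IsDomain R] (d : m → R) :
    (diagonal d).charpoly.roots = Finset.univ.val.map d := by
  rw [charpoly_diagonal, Finset.prod_eq_multiset_prod,
    ← roots_multiset_prod_X_sub_C (Finset.univ.val.map d), Multiset.map_map]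
  rfl

lemma IsHermitian.sum_eigenvalues_eq_sum_roots {H : Matrix m m ℂ} (hH : H.IsHermitian)
    (f : ℝ → ℝ) : ∑ i, f (hH.eigenvalues i) = (H.charpoly.roots.map fun z => f z.re).sum := by
  rw [hH.roots_charpoly_eq_eigenvalues, Multiset.map_map, Finset.sum_eq_multiset_sum]
  simp [Function.comp_def]

lemma IsHermitian.roots_charpoly_real_smul {H : Matrix m m ℂ} (hH : H.IsHermitian) (r : ℝ) :
    ((r : ℂ) • H).charpoly.roots = H.charpoly.roots.map ((r : ℂ) * ·) := by
  set U : Matrix m m ℂ := (hH.eigenvectorUnitary : Matrix m m ℂ)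
  have hconj : (r : ℂ) • H = U * diagonal (fun i => (r : ℂ) * hH.eigenvalues i) * star U := by
    conv_lhs => rw [hH.spectral_theorem, Unitary.conjStarAlgAut_apply]
    rw [← Matrix.smul_mul, ← Matrix.mul_smul, ← diagonal_smul]
    rfl
  rw [hconj, charpoly_mul_comm, ← mul_assoc,
    Unitary.star_mul_self_of_mem hH.eigenvectorUnitary.2, one_mul, roots_charpoly_diagonal,
    hH.roots_charpoly_eq_eigenvalues, Multiset.map_map]
  rfl

end Matrix

lemma reM_fromBlocks_zero₁₁_zero₂₂ {m : Type*} [Fintype m] (A B : Matrix m m ℂ) :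
    reM (fromBlocks 0 A B 0) = fromBlocks 0 ((2⁻¹ : ℂ) • (A + Bᴴ)) ((2⁻¹ : ℂ) • (A + Bᴴ))ᴴ 0 := by
  simp [reM, fromBlocks_conjTranspose, fromBlocks_add, fromBlocks_smul, add_comm]

section Schatten

variable {m : Type*} [Fintype m] [DecidableEq m] (p : ℝ)

noncomputable def schattenPowerSum (A : Matrix m m ℂ) : ℝ :=
  ∑ i, √((isHermitian_conjTranspose_mul_self A).eigenvalues i) ^ p

lemma schattenNorm_eq_schattenPowerSum_rpow (A : Matrix m m ℂ) :
    schattenNorm p A = schattenPowerSum p A ^ (1 / p) := rfl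

lemma schattenPowerSum_nonneg (A : Matrix m m ℂ) : 0 ≤ schattenPowerSum p A :=
  Finset.sum_nonneg fun _ _ => by positivity

lemma schattenPowerSum_eq_sum_roots (A : Matrix m m ℂ) :
    schattenPowerSum p A = ((Aᴴ * A).charpoly.roots.map fun z => √z.re ^ p).sum :=
  (isHermitian_conjTranspose_mul_self A).sum_eigenvalues_eq_sum_roots fun x => √x ^ p

lemma schattenPowerSum_conjTranspose (A : Matrix m m ℂ) :
    schattenPowerSum p Aᴴ = schattenPowerSum p A := by
  rw [schattenPowerSum_eq_sum_roots, schattenPowerSum_eq_sum_roots, conjTranspose_conjTranspose,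
    charpoly_mul_comm]

lemma schattenPowerSum_fromBlocks_zero₁₁_zero₂₂ (B C : Matrix m m ℂ) :
    schattenPowerSum p (fromBlocks 0 B C 0) = schattenPowerSum p B + schattenPowerSum p C := by
  have hsq : (fromBlocks 0 B C 0)ᴴ * fromBlocks 0 B C 0 = fromBlocks (Cᴴ * C) 0 0 (Bᴴ * B) := by
    simp [fromBlocks_conjTranspose, fromBlocks_multiply]
  rw [schattenPowerSum_eq_sum_roots, hsq, charpoly_fromBlocks_zero₁₂,
    Polynomial.roots_mul (mul_ne_zero (charpoly_monic _).ne_zero (charpoly_monic _).ne_zero),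
    Multiset.map_add, Multiset.sum_add, add_comm, ← schattenPowerSum_eq_sum_roots,
    ← schattenPowerSum_eq_sum_roots]

lemma schattenPowerSum_smul (c : ℂ) (A : Matrix m m ℂ) :
    schattenPowerSum p (c • A) = ‖c‖ ^ p * schattenPowerSum p A := by
  have hsq : (c • A)ᴴ * (c • A) = ((‖c‖ ^ 2 : ℝ) : ℂ) • (Aᴴ * A) := by
    rw [conjTranspose_smul, Matrix.smul_mul, Matrix.mul_smul, smul_smul, star_def, conj_mul']
    push_cast
    rfl
  rw [schattenPowerSum_eq_sum_roots, hsq,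
    (isHermitian_conjTranspose_mul_self A).roots_charpoly_real_smul, Multiset.map_map,
    schattenPowerSum_eq_sum_roots, ← Multiset.sum_map_mul_left]
  refine congrArg Multiset.sum (Multiset.map_congr rfl fun z _ => ?_)
  rw [Function.comp_apply, re_ofReal_mul, Real.sqrt_mul (by positivity),
    Real.sqrt_sq (norm_nonneg c), Real.mul_rpow (norm_nonneg c) (Real.sqrt_nonneg _)]

variable {p}

lemma schattenNorm_smul (hp : p ≠ 0) (c : ℂ) (A : Matrix m m ℂ) :
    schattenNorm p (c • A) = ‖c‖ * schattenNorm p A := by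
  rw [schattenNorm_eq_schattenPowerSum_rpow, schattenNorm_eq_schattenPowerSum_rpow,
    schattenPowerSum_smul, Real.mul_rpow (by positivity) (schattenPowerSum_nonneg p A),
    ← Real.rpow_mul (norm_nonneg c), mul_one_div_cancel hp, Real.rpow_one]

lemma schattenNorm_fromBlocks_conjTranspose (D : Matrix m m ℂ) :
    schattenNorm p (fromBlocks 0 D Dᴴ 0) = 2 ^ (1 / p) * schattenNorm p D := by
  rw [schattenNorm_eq_schattenPowerSum_rpow, schattenPowerSum_fromBlocks_zero₁₁_zero₂₂,
    schattenPowerSum_conjTranspose, ← two_mul,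
    Real.mul_rpow zero_le_two (schattenPowerSum_nonneg p D)]
  rfl

lemma schattenNorm_reM_fromBlocks_zero₁₁_zero₂₂ (hp : p ≠ 0) (A B : Matrix m m ℂ) :
    schattenNorm p (reM (fromBlocks 0 A B 0)) = 2 ^ (1 / p - 1) * schattenNorm p (A + Bᴴ) := by
  rw [reM_fromBlocks_zero₁₁_zero₂₂, schattenNorm_fromBlocks_conjTranspose, schattenNorm_smul hp,
    Real.rpow_sub two_pos, Real.rpow_one]
  norm_num
  ring

end Schatten

theorem stmt_5 {n : ℕ} (p : ℝ) (hp : 1 ≤ p) (A B : Matrix (Fin n) (Fin n) ℂ) :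
    wp p (Matrix.fromBlocks 0 A B 0) =
      (2 : ℝ) ^ (1 / p - 1) *
        ⨆ θ : ℝ, schattenNorm p
          (Complex.exp (θ * Complex.I) • A + Complex.exp (-(θ * Complex.I)) • Bᴴ) := by
  have hp0 : p ≠ 0 := by positivity
  have hrot : ∀ θ : ℝ, (Complex.exp (θ * Complex.I) • B)ᴴ = Complex.exp (-(θ * Complex.I)) • Bᴴ := by
    intro θ
    rw [conjTranspose_smul, star_def, ← exp_conj]
    simp
  simp_rw [wp, fromBlocks_smul, smul_zero, schattenNorm_reM_fromBlocks_zero₁₁_zero₂₂ hp0, hrot]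
  exact (Real.mul_iSup_of_nonneg (by positivity) _).symm
end

section
/- For n×n complex matrices A and B and 1 ≤ p < ∞, ω_p(A ⊕ B) ≤ (ω_p(A)^p + ω_p(B)^p)^{1/p}. -/
open Matrix Complex

/-!
Rotation and taking real parts commute with direct sums:
`Re(e^{iθ}(A ⊕ B)) = Re(e^{iθ}A) ⊕ Re(e^{iθ}B)`. The eigenvalues of `(X ⊕ Y)ᴴ(X ⊕ Y)` are those of
`XᴴX` together with those of `YᴴY`, so `‖X ⊕ Y‖_p^p = ‖X‖_p^p + ‖Y‖_p^p`, and each term is bounded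
by `ω_p(A)^p` resp. `ω_p(B)^p`. Since a real `⨆` of an unbounded family is `0`, we also need that
`θ ↦ ‖Re(e^{iθ}A)‖_p` is bounded, which follows from the Frobenius norm bound
`‖Re(e^{iθ}A)‖_F ≤ ‖A‖_F`.
-/

namespace Matrix

variable {𝕜 : Type*} [RCLike 𝕜] {m m' n : Type*} [Fintype m] [Fintype m'] [Fintype n]

theorem IsHermitian.eigenvalues_fromBlocks_zero [DecidableEq m] [DecidableEq m']
    {P : Matrix m m 𝕜} {Q : Matrix m' m' 𝕜}
    {M : Matrix (m ⊕ m') (m ⊕ m') 𝕜} (hM : M.IsHermitian) (hP : P.IsHermitian)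
    (hQ : Q.IsHermitian) (hMPQ : M = Matrix.fromBlocks P 0 0 Q) :
    Finset.univ.val.map hM.eigenvalues
      = Finset.univ.val.map hP.eigenvalues + Finset.univ.val.map hQ.eigenvalues := by
  have hroots : M.charpoly.roots = P.charpoly.roots + Q.charpoly.roots := by
    rw [hMPQ, charpoly_fromBlocks_zero₂₁,
      Polynomial.roots_mul ((charpoly_monic P).mul (charpoly_monic Q)).ne_zero]
  simp only [hM.roots_charpoly_eq_eigenvalues, hP.roots_charpoly_eq_eigenvalues,
    hQ.roots_charpoly_eq_eigenvalues, ← Multiset.map_map, ← Multiset.map_add] at hroots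
  exact Multiset.map_injective RCLike.ofReal_injective hroots

theorem IsHermitian.sum_eigenvalues_fromBlocks_zero [DecidableEq m] [DecidableEq m']
    {P : Matrix m m 𝕜} {Q : Matrix m' m' 𝕜}
    {M : Matrix (m ⊕ m') (m ⊕ m') 𝕜} (hM : M.IsHermitian) (hP : P.IsHermitian)
    (hQ : Q.IsHermitian) (hMPQ : M = Matrix.fromBlocks P 0 0 Q) (f : ℝ → ℝ) :
    ∑ i, f (hM.eigenvalues i) = ∑ i, f (hP.eigenvalues i) + ∑ i, f (hQ.eigenvalues i) := by
  simpa [Multiset.map_map, Function.comp_def] using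
    congrArg (fun s => (s.map f).sum) (hM.eigenvalues_fromBlocks_zero hP hQ hMPQ)

section frobenius

attribute [local instance] frobeniusNormedAddCommGroup frobeniusNormedSpace

theorem trace_conjTranspose_mul_self_eq_frobenius_norm_sq (N : Matrix m n 𝕜) :
    (Nᴴ * N).trace = ((‖N‖ ^ 2 : ℝ) : 𝕜) := by
  rw [frobenius_norm_def, ← Real.rpow_natCast, ← Real.rpow_mul (by positivity), trace,
    Finset.sum_comm]
  simp [mul_apply, RCLike.conj_mul]

theorem eigenvalues_conjTranspose_mul_self_le_frobenius_norm_sq [DecidableEq n]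
    (N : Matrix m n 𝕜) (i : n) :
    (isHermitian_conjTranspose_mul_self N).eigenvalues i ≤ ‖N‖ ^ 2 := by
  have hsum := (isHermitian_conjTranspose_mul_self N).trace_eq_sum_eigenvalues
  rw [trace_conjTranspose_mul_self_eq_frobenius_norm_sq, ← RCLike.ofReal_sum,
    RCLike.ofReal_inj] at hsum
  rw [hsum]
  exact Finset.single_le_sum (fun j _ => eigenvalues_conjTranspose_mul_self_nonneg N j)
    (Finset.mem_univ i)

end frobenius

end Matrix

section

variable {m m' : Type*} [Fintype m] [Fintype m']

theorem reM_smul_fromBlocks_zero (c : ℂ) (A : Matrix m m ℂ) (B : Matrix m' m' ℂ) :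
    reM (c • fromBlocks A 0 0 B) = fromBlocks (reM (c • A)) 0 0 (reM (c • B)) := by
  simp [reM, fromBlocks_smul, fromBlocks_conjTranspose, fromBlocks_add]

attribute [local instance] frobeniusNormedAddCommGroup frobeniusNormedSpace

theorem frobenius_norm_reM_le (A : Matrix m m ℂ) : ‖reM A‖ ≤ ‖A‖ := by
  calc ‖reM A‖ ≤ 2⁻¹ * (‖A‖ + ‖Aᴴ‖) := by
        rw [reM, norm_smul]
        simpa using norm_add_le A Aᴴ
    _ = ‖A‖ := by rw [frobenius_norm_conjTranspose]; ring

variable [DecidableEq m] [DecidableEq m']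

theorem schattenNorm_nonneg (p : ℝ) (A : Matrix m m ℂ) : 0 ≤ schattenNorm p A := by
  unfold schattenNorm
  positivity

theorem schattenNorm_rpow {p : ℝ} (hp : p ≠ 0) (A : Matrix m m ℂ) :
    schattenNorm p A ^ p
      = ∑ i, √((isHermitian_conjTranspose_mul_self A).eigenvalues i) ^ p := by
  rw [schattenNorm, ← Real.rpow_mul (by positivity), one_div_mul_cancel hp, Real.rpow_one]

theorem schattenNorm_fromBlocks_zero {p : ℝ} (hp : p ≠ 0) (P : Matrix m m ℂ)
    (Q : Matrix m' m' ℂ) :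
    schattenNorm p (fromBlocks P 0 0 Q)
      = (schattenNorm p P ^ p + schattenNorm p Q ^ p) ^ (1 / p) := by
  have hPQ : (fromBlocks P 0 0 Q)ᴴ * fromBlocks P 0 0 Q = fromBlocks (Pᴴ * P) 0 0 (Qᴴ * Q) := by
    simp [fromBlocks_conjTranspose, fromBlocks_multiply]
  rw [schattenNorm, schattenNorm_rpow hp, schattenNorm_rpow hp]
  congr 1
  exact (isHermitian_conjTranspose_mul_self _).sum_eigenvalues_fromBlocks_zero
    (isHermitian_conjTranspose_mul_self P) (isHermitian_conjTranspose_mul_self Q) hPQ (√· ^ p)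

theorem schattenNorm_le_frobenius_norm {p : ℝ} (hp : 0 ≤ p) (A : Matrix m m ℂ) :
    schattenNorm p A ≤ (Fintype.card m * ‖A‖ ^ p) ^ (1 / p) := by
  refine Real.rpow_le_rpow (by positivity) ?_ (by positivity)
  calc ∑ i, √((isHermitian_conjTranspose_mul_self A).eigenvalues i) ^ p
      ≤ ∑ _i : m, ‖A‖ ^ p := by
        gcongr with i
        exact (Real.sqrt_le_left (norm_nonneg A)).mpr
          (eigenvalues_conjTranspose_mul_self_le_frobenius_norm_sq A i)
    _ = Fintype.card m * ‖A‖ ^ p := by simp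

theorem bddAbove_schattenNorm_reM {p : ℝ} (hp : 0 ≤ p) (A : Matrix m m ℂ) :
    BddAbove (Set.range fun θ : ℝ => schattenNorm p (reM (exp (θ * I) • A))) := by
  refine ⟨(Fintype.card m * ‖A‖ ^ p) ^ (1 / p), ?_⟩
  rintro _ ⟨θ, rfl⟩
  refine (schattenNorm_le_frobenius_norm hp _).trans ?_
  gcongr
  calc ‖reM (exp (θ * I) • A)‖ ≤ ‖exp (θ * I) • A‖ := frobenius_norm_reM_le _
    _ = ‖A‖ := by rw [norm_smul, norm_exp_ofReal_mul_I, one_mul]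

theorem schattenNorm_reM_le_wp {p : ℝ} (hp : 0 ≤ p) (A : Matrix m m ℂ) (θ : ℝ) :
    schattenNorm p (reM (exp (θ * I) • A)) ≤ wp p A :=
  le_ciSup (bddAbove_schattenNorm_reM hp A) θ

end

theorem stmt_6 {n : ℕ} (p : ℝ) (hp : 1 ≤ p) (A B : Matrix (Fin n) (Fin n) ℂ) :
    wp p (Matrix.fromBlocks A 0 0 B) ≤ (wp p A ^ p + wp p B ^ p) ^ (1 / p) := by
  have hp0 : 0 ≤ p := zero_le_one.trans hp
  refine ciSup_le fun θ => ?_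
  rw [reM_smul_fromBlocks_zero, schattenNorm_fromBlocks_zero (by positivity)]
  have hA0 := schattenNorm_nonneg p (reM (exp (θ * I) • A))
  have hB0 := schattenNorm_nonneg p (reM (exp (θ * I) • B))
  refine Real.rpow_le_rpow (add_nonneg (Real.rpow_nonneg hA0 p) (Real.rpow_nonneg hB0 p))
    (add_le_add ?_ ?_) (by positivity)
  · exact Real.rpow_le_rpow hA0 (schattenNorm_reM_le_wp hp0 A θ) hp0
  · exact Real.rpow_le_rpow hB0 (schattenNorm_reM_le_wp hp0 B θ) hp0
end
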